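/- arXiv:2302.10383 — 4 statements merged into one kernel-verified Lean document; each statement's English description precedes it below -/
import Mathlib

section
/- For any two positive semidefinite real n × n matrices A and B, det(I + A + B) ≤ det(I + A) · det(I + B). Consequently, for data matrices Z₁, Z₂ and c > 0, log det(I + c(Z₁Z₁ᵀ + Z₂Z₂ᵀ)) ≤ log det(I + c Z₁Z₁ᵀ) + log det(I + c Z₂Z₂ᵀ). -/
/-!
Write `B = T Tᴴ`. The matrix determinant lemma gives
`det (1 + A + T Tᴴ) = det (1 + A) * det (1 + Tᴴ (1 + A)⁻¹ T)`, while Weinstein–Aronszajn gives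
`det (1 + B) = det (1 + Tᴴ T)`. Since `(1 + A)⁻¹ ≤ 1` in the Loewner order, the claim follows from
monotonicity of the determinant on positive definite matrices, which in turn reduces, by the
determinant lemma once more, to `1 ≤ det (1 + M)` for `M ⪰ 0`.
-/

open Matrix
open scoped ComplexOrder

namespace Matrix

variable {n 𝕜 : Type*} [Fintype n] [DecidableEq n] [RCLike 𝕜]

lemma PosSemidef.one_le_det_one_add {M : Matrix n n 𝕜} (hM : M.PosSemidef) :
    1 ≤ det (1 + M) := by
  have hH : (1 + M).IsHermitian := (PosSemidef.one.add hM).isHermitian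
  rw [hH.det_eq_prod_eigenvalues, ← RCLike.ofReal_prod, ← RCLike.ofReal_one,
    RCLike.ofReal_le_ofReal]
  refine Finset.one_le_prod fun i _ => ?_
  have hunit : star ⇑(hH.eigenvectorBasis i) ⬝ᵥ ⇑(hH.eigenvectorBasis i) = (1 : 𝕜) := by
    rw [dotProduct_comm, ← EuclideanSpace.inner_eq_star_dotProduct, inner_self_eq_norm_sq_to_K,
      hH.eigenvectorBasis.orthonormal.1 i]
    simp
  rw [hH.eigenvalues_eq, add_mulVec, one_mulVec, dotProduct_add, map_add, hunit, RCLike.one_re]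
  exact le_add_of_nonneg_right (hM.re_dotProduct_nonneg _)

open scoped MatrixOrder in
lemma PosDef.det_le_det {X Y : Matrix n n 𝕜} (hX : X.PosDef) (hXY : (Y - X).PosSemidef) :
    det X ≤ det Y := by
  obtain ⟨U, hU⟩ := CStarAlgebra.nonneg_iff_eq_mul_star_self.mp hXY.nonneg
  have hY : Y = X + U * Uᴴ := by rw [← star_eq_conjTranspose, ← hU, add_sub_cancel]
  rw [hY, det_add_mul _ _ hX.det_pos.ne'.isUnit]
  calc det X = det X * 1 := (mul_one _).symm
    _ ≤ det X * det (1 + Uᴴ * X⁻¹ * U) := by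
      gcongr
      · exact hX.det_pos.le
      · exact PosSemidef.one_le_det_one_add (hX.inv.posSemidef.conjTranspose_mul_mul_same U)

lemma PosSemidef.one_sub_inv_one_add {A : Matrix n n 𝕜} (hA : A.PosSemidef) :
    (1 - (1 + A)⁻¹).PosSemidef := by
  set P := (1 + A)⁻¹
  have hP : P.IsHermitian := (PosSemidef.one.add hA).inv.isHermitian
  have hdet : IsUnit (1 + A).det := (PosDef.one.add_posSemidef hA).det_pos.ne'.isUnit
  have hcongr : 1 - P = P * (A + Aᴴ * A) * Pᴴ := calc
    1 - P = P * A := by rw [← nonsing_inv_mul _ hdet, mul_add, mul_one, add_sub_cancel_left]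
    _ = P * A * ((1 + A) * P) := by rw [mul_nonsing_inv _ hdet, mul_one]
    _ = P * (A + Aᴴ * A) * Pᴴ := by rw [hA.isHermitian.eq, hP.eq]; noncomm_ring
  rw [hcongr]
  exact (hA.add (posSemidef_conjTranspose_mul_self A)).mul_mul_conjTranspose_same P

open scoped MatrixOrder in
theorem det_one_add_add_le_mul {A B : Matrix n n 𝕜} (hA : A.PosSemidef) (hB : B.PosSemidef) :
    det (1 + A + B) ≤ det (1 + A) * det (1 + B) := by
  obtain ⟨T, rfl⟩ := CStarAlgebra.nonneg_iff_eq_mul_star_self.mp hB.nonneg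
  have hA1 : (1 + A).PosDef := PosDef.one.add_posSemidef hA
  rw [star_eq_conjTranspose, det_add_mul _ _ hA1.det_pos.ne'.isUnit, det_one_add_mul_comm T Tᴴ]
  have hdiff : 1 + Tᴴ * T - (1 + Tᴴ * (1 + A)⁻¹ * T) = Tᴴ * (1 - (1 + A)⁻¹) * T := by
    noncomm_ring
  gcongr
  · exact hA1.det_pos.le
  · refine PosDef.det_le_det
      (PosDef.one.add_posSemidef (hA1.inv.posSemidef.conjTranspose_mul_mul_same T)) ?_
    rw [hdiff]
    exact hA.one_sub_inv_one_add.conjTranspose_mul_mul_same T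

theorem log_det_one_add_add_le {A B : Matrix n n ℝ} (hA : A.PosSemidef) (hB : B.PosSemidef) :
    Real.log (det (1 + A + B)) ≤ Real.log (det (1 + A)) + Real.log (det (1 + B)) := by
  have hA1 : (1 + A).PosDef := PosDef.one.add_posSemidef hA
  rw [← Real.log_mul hA1.det_pos.ne' (PosDef.one.add_posSemidef hB).det_pos.ne']
  exact Real.log_le_log (hA1.add_posSemidef hB).det_pos (det_one_add_add_le_mul hA hB)

end Matrix

theorem stmt_4 (n : ℕ) :
    (∀ A B : Matrix (Fin n) (Fin n) ℝ, A.PosSemidef → B.PosSemidef →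
      Matrix.det (1 + A + B) ≤ Matrix.det (1 + A) * Matrix.det (1 + B)) ∧
    (∀ (m₁ m₂ : ℕ) (Z₁ : Matrix (Fin n) (Fin m₁) ℝ) (Z₂ : Matrix (Fin n) (Fin m₂) ℝ)
      (c : ℝ), 0 < c →
      Real.log (Matrix.det (1 + c • (Z₁ * Z₁ᵀ + Z₂ * Z₂ᵀ))) ≤
        Real.log (Matrix.det (1 + c • (Z₁ * Z₁ᵀ))) +
          Real.log (Matrix.det (1 + c • (Z₂ * Z₂ᵀ)))) := by
  refine ⟨fun _ _ => det_one_add_add_le_mul, fun m₁ m₂ Z₁ Z₂ c hc => ?_⟩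
  have hgram {m : ℕ} (Z : Matrix (Fin n) (Fin m) ℝ) : (c • (Z * Zᵀ)).PosSemidef := by
    simpa using (posSemidef_self_mul_conjTranspose Z).smul hc.le
  rw [smul_add, ← add_assoc]
  exact log_det_one_add_add_le (hgram Z₁) (hgram Z₂)
end

section
/- If Z₁ ∈ ℝ^{n×m₁} and Z₂ ∈ ℝ^{n×m₂} satisfy Z₁ᵀ Z₂ = 0 (mutually orthogonal column spaces), then for any c > 0, det(I + c(Z₁Z₁ᵀ + Z₂Z₂ᵀ)) = det(I + c Z₁Z₁ᵀ) · det(I + c Z₂Z₂ᵀ). -/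
open Matrix

theorem stmt_5 (n m₁ m₂ : ℕ) (Z₁ : Matrix (Fin n) (Fin m₁) ℝ) (Z₂ : Matrix (Fin n) (Fin m₂) ℝ)
    (horth : Z₁ᵀ * Z₂ = 0) (c : ℝ) (hc : 0 < c) :
    Matrix.det (1 + c • (Z₁ * Z₁ᵀ + Z₂ * Z₂ᵀ)) =
      Matrix.det (1 + c • (Z₁ * Z₁ᵀ)) * Matrix.det (1 + c • (Z₂ * Z₂ᵀ)) := by
  have hAB : (Z₁ * Z₁ᵀ) * (Z₂ * Z₂ᵀ) = 0 := by
    calc (Z₁ * Z₁ᵀ) * (Z₂ * Z₂ᵀ) = Z₁ * (Z₁ᵀ * Z₂) * Z₂ᵀ := by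
          simp [Matrix.mul_assoc]
      _ = 0 := by rw [horth]; simp
  have key : (1 + c • (Z₁ * Z₁ᵀ)) * (1 + c • (Z₂ * Z₂ᵀ))
      = 1 + c • (Z₁ * Z₁ᵀ + Z₂ * Z₂ᵀ) := by
    simp only [add_mul, mul_add, one_mul, mul_one, mul_smul_comm, smul_mul_assoc, hAB,
      smul_zero, add_zero, smul_add]
    abel
  rw [← key, Matrix.det_mul]
end

section
/- Triangle inequality for the nuclear norm with orthogonality equality case: for Z₁ ∈ ℝ^{d×m₁}, Z₂ ∈ ℝ^{d×m₂}, the horizontal concatenation Z = [Z₁ Z₂] satisfies ‖Z‖_* ≤ ‖Z₁‖_* + ‖Z₂‖_*; moreover, if Z₁ᵀ Z₂ = 0, i.e., every column of Z₁ is orthogonal to every column of Z₂ in ℝ^d (so the column spaces of Z₁ and Z₂ are orthogonal), then equality holds. -/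
open Matrix

section NuclearAux

variable {m n p q : Type*} [Fintype m] [Fintype n] [DecidableEq n] [Fintype p] [Fintype q]
  [DecidableEq p] [DecidableEq q]

omit [DecidableEq n] in
lemma dot_conjTranspose_mulVec' (B : Matrix m n ℝ) (M : Matrix m n ℝ) (v : n → ℝ) :
    v ⬝ᵥ ((Bᴴ * M) *ᵥ v) = (B *ᵥ v) ⬝ᵥ (M *ᵥ v) := by
  rw [← mulVec_mulVec, dotProduct_mulVec, vecMul_conjTranspose]
  simp

lemma conj_diag_mul (V : Matrix n n ℝ) (hVsV : star V * V = 1) (a b : n → ℝ) :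
    (V * diagonal a * star V) * (V * diagonal b * star V)
      = V * diagonal (fun i => a i * b i) * star V := by
  have h1 : (V * diagonal a * star V) * (V * diagonal b * star V)
      = V * (diagonal a * ((star V * V) * (diagonal b * star V))) := by
    simp only [Matrix.mul_assoc]
  rw [h1, hVsV, Matrix.one_mul, ← Matrix.mul_assoc (diagonal a), Matrix.diagonal_mul_diagonal,
    ← Matrix.mul_assoc]

noncomputable def Matrix.PosSemidef.sqrt {M : Matrix n n ℝ} (hM : M.PosSemidef) :
    Matrix n n ℝ :=
  (hM.1.eigenvectorUnitary : Matrix n n ℝ) * diagonal (Real.sqrt ∘ hM.1.eigenvalues) *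
    star (hM.1.eigenvectorUnitary : Matrix n n ℝ)

open scoped MatrixOrder in
lemma Matrix.PosSemidef.sqrt_eq_cfc' {M : Matrix n n ℝ} (hM : M.PosSemidef) :
    hM.sqrt = CFC.sqrt M := by
  rw [CFC.sqrt_eq_cfc, cfc_nnreal_eq_real _ M, hM.1.cfc_eq]
  simp [Matrix.PosSemidef.sqrt, IsHermitian.cfc, Function.comp_def, Real.coe_toNNReal',
    hM.eigenvalues_nonneg]

open scoped MatrixOrder in
lemma Matrix.PosSemidef.posSemidef_sqrt {M : Matrix n n ℝ} (hM : M.PosSemidef) :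
    hM.sqrt.PosSemidef := by
  rw [hM.sqrt_eq_cfc']
  exact nonneg_iff_posSemidef.mp (CFC.sqrt_nonneg M)

open scoped MatrixOrder in
lemma Matrix.PosSemidef.sqrt_mul_self {M : Matrix n n ℝ} (hM : M.PosSemidef) :
    hM.sqrt * hM.sqrt = M := by
  rw [hM.sqrt_eq_cfc']
  exact CFC.sqrt_mul_sqrt_self M hM.nonneg

open scoped MatrixOrder in
lemma Matrix.PosSemidef.eq_sqrt_of_sq_eq {A B : Matrix n n ℝ} (hA : A.PosSemidef)
    (hB : B.PosSemidef) (hAB : A ^ 2 = B) : A = hB.sqrt := by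
  rw [hB.sqrt_eq_cfc']
  exact (CFC.sqrt_unique (by rw [← sq]; exact hAB) hA.nonneg).symm

lemma trace_sqrt_eq' {M : Matrix n n ℝ} (hM : M.PosSemidef) :
    hM.sqrt.trace = ∑ i, Real.sqrt (hM.1.eigenvalues i) := by
  rw [Matrix.PosSemidef.sqrt, Matrix.trace_mul_cycle, Unitary.coe_star_mul_self, one_mul,
    Matrix.trace_diagonal]
  simp

lemma sum_sqrt_eig_congr {M N : Matrix n n ℝ} (h : M = N) (hM : M.IsHermitian)
    (hN : N.IsHermitian) :
    (∑ i, Real.sqrt (hM.eigenvalues i)) = ∑ i, Real.sqrt (hN.eigenvalues i) := by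
  cases h; rfl

lemma sum_sqrt_eig_zero (hN : (0 : Matrix n n ℝ).IsHermitian) :
    (∑ i, Real.sqrt (hN.eigenvalues i)) = 0 := by
  have h0 : (0 : Matrix n n ℝ).PosSemidef := Matrix.PosSemidef.zero
  have hs : (0 : Matrix n n ℝ) = h0.sqrt :=
    h0.eq_sqrt_of_sq_eq h0 (by rw [pow_two, Matrix.mul_zero])
  have := trace_sqrt_eq' h0
  rw [← hs] at this
  simpa using this.symm

lemma trace_conj_eq (V : Matrix.unitaryGroup n ℝ) (M : Matrix n n ℝ) :
    M.trace = ((star (V : Matrix n n ℝ)) * M * V).trace := by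
  rw [Matrix.trace_mul_cycle, (Matrix.mem_unitaryGroup_iff).mp V.2, Matrix.one_mul]

lemma trace_conj_sum (V : Matrix.unitaryGroup n ℝ) (M : Matrix n n ℝ) :
    ((star (V : Matrix n n ℝ)) * M * V).trace
      = ∑ i, (fun k => (V : Matrix n n ℝ) k i) ⬝ᵥ (M *ᵥ (fun k => (V : Matrix n n ℝ) k i)) := by
  simp only [Matrix.trace, Matrix.diag, Matrix.mul_apply, dotProduct, mulVec,
    Finset.sum_mul, Finset.mul_sum, star_apply, star_trivial]
  refine Finset.sum_congr rfl fun i _ => ?_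
  rw [Finset.sum_comm]
  exact Finset.sum_congr rfl fun l _ => Finset.sum_congr rfl fun k _ => by ring

/-- Dual upper bound: for contractive `W`, `trace (Bᴴ W) ≤ ∑ √(eigenvalues of BᴴB)`. -/
lemma trace_le_nn (B W : Matrix m n ℝ)
    (hW : ∀ x : n → ℝ, (W *ᵥ x) ⬝ᵥ (W *ᵥ x) ≤ x ⬝ᵥ x) :
    (Bᴴ * W).trace ≤ ∑ i, Real.sqrt ((isHermitian_conjTranspose_mul_self B).eigenvalues i) := by
  set hH := isHermitian_conjTranspose_mul_self B with hHdef
  set V := hH.eigenvectorUnitary with hV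
  rw [trace_conj_eq V, trace_conj_sum V]
  refine Finset.sum_le_sum fun i _ => ?_
  set v : n → ℝ := fun k => (V : Matrix n n ℝ) k i with hvdef
  have hveq : v = ⇑(hH.eigenvectorBasis i) := by
    funext k; simp [hvdef, hV, Matrix.IsHermitian.eigenvectorUnitary_apply]
  have hvv : v ⬝ᵥ v = 1 := by
    have h := orthonormal_iff_ite.mp hH.eigenvectorBasis.orthonormal i i
    rw [if_pos rfl] at h
    rw [hveq, ← h]
    simp only [PiLp.inner_apply, dotProduct, RCLike.inner_apply', conj_trivial]
  have hBv : (B *ᵥ v) ⬝ᵥ (B *ᵥ v) = hH.eigenvalues i := by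
    rw [← dot_conjTranspose_mulVec' B B v, hveq, hH.mulVec_eigenvectorBasis]
    rw [← hveq, dotProduct_smul, hvv]
    simp
  have hWv : (W *ᵥ v) ⬝ᵥ (W *ᵥ v) ≤ 1 := (hW v).trans_eq hvv
  rw [dot_conjTranspose_mulVec']
  have cs := Real.sum_mul_le_sqrt_mul_sqrt Finset.univ (B *ᵥ v) (W *ᵥ v)
  have h1 : ∑ k, (B *ᵥ v) k ^ 2 = hH.eigenvalues i := by
    rw [← hBv]; simp [dotProduct, sq]
  have h2 : Real.sqrt (∑ k, (W *ᵥ v) k ^ 2) ≤ 1 := by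
    rw [show ∑ k, (W *ᵥ v) k ^ 2 = (W *ᵥ v) ⬝ᵥ (W *ᵥ v) by simp [dotProduct, sq]]
    exact Real.sqrt_le_one.mpr hWv
  calc (B *ᵥ v) ⬝ᵥ (W *ᵥ v) = ∑ k, (B *ᵥ v) k * (W *ᵥ v) k := rfl
    _ ≤ Real.sqrt (∑ k, (B *ᵥ v) k ^ 2) * Real.sqrt (∑ k, (W *ᵥ v) k ^ 2) := cs
    _ ≤ Real.sqrt (hH.eigenvalues i) * 1 := by
        rw [h1]
        exact mul_le_mul_of_nonneg_left h2 (Real.sqrt_nonneg _)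
    _ = _ := mul_one _

/-- Existence of an optimal contraction attaining the nuclear norm. -/
lemma exists_opt (B : Matrix m n ℝ) :
    ∃ W : Matrix m n ℝ, (∀ x : n → ℝ, (W *ᵥ x) ⬝ᵥ (W *ᵥ x) ≤ x ⬝ᵥ x) ∧
      (Bᴴ * W).trace = ∑ i, Real.sqrt ((isHermitian_conjTranspose_mul_self B).eigenvalues i) := by
  set hH := isHermitian_conjTranspose_mul_self B with hHdef
  set lam : n → ℝ := hH.eigenvalues with hlam
  have hP : (Bᴴ * B).PosSemidef := posSemidef_conjTranspose_mul_self B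
  have hnn : ∀ i, 0 ≤ lam i := fun i => hP.eigenvalues_nonneg i
  set V : Matrix n n ℝ := (hH.eigenvectorUnitary : Matrix n n ℝ) with hV
  have hVsV : star V * V = 1 := (Matrix.mem_unitaryGroup_iff').mp hH.eigenvectorUnitary.2
  have hVVs : V * star V = 1 := (Matrix.mem_unitaryGroup_iff).mp hH.eigenvectorUnitary.2
  have hsVH : (star V)ᴴ = V := by
    rw [Matrix.star_eq_conjTranspose, conjTranspose_conjTranspose]
  set g : n → ℝ := fun i => if lam i = 0 then 0 else (Real.sqrt (lam i))⁻¹ with hg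
  have hBB : Bᴴ * B = V * diagonal lam * star V := by
    have := hH.spectral_theorem
    exact this.trans (by simp [hV, hlam, Function.comp_def])
  have hQH : (V * diagonal g * star V)ᴴ = V * diagonal g * star V := by
    simp only [Matrix.conjTranspose_mul, Matrix.diagonal_conjTranspose, hsVH]
    rw [show star g = g from funext fun i => star_trivial _, Matrix.mul_assoc]
    rfl
  refine ⟨B * (V * diagonal g * star V), ?_, ?_⟩
  · -- contractivity
    intro x
    set e : n → ℝ := fun i => g i * (lam i * g i) with he
    have hWW : (B * (V * diagonal g * star V))ᴴ * (B * (V * diagonal g * star V))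
        = V * diagonal e * star V := by
      calc (B * (V * diagonal g * star V))ᴴ * (B * (V * diagonal g * star V))
          = (V * diagonal g * star V)ᴴ * (Bᴴ * B) * (V * diagonal g * star V) := by
            simp only [Matrix.conjTranspose_mul, Matrix.mul_assoc]
        _ = (V * diagonal g * star V) * (V * diagonal lam * star V)
              * (V * diagonal g * star V) := by rw [hQH, hBB]
        _ = V * diagonal e * star V := by
            simp only [conj_diag_mul V hVsV]
            have hfe : (fun i => g i * lam i * g i) = e := by funext i; rw [he]; ring
            rw [hfe]
    have he01 : ∀ i, e i = 0 ∨ e i = 1 := by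
      intro i
      by_cases h : lam i = 0
      · left; simp [he, hg, h]
      · right
        have hs : Real.sqrt (lam i) ≠ 0 :=
          Real.sqrt_ne_zero'.mpr (lt_of_le_of_ne (hnn i) (Ne.symm h))
        simp only [he, hg, if_neg h]
        rw [show lam i = Real.sqrt (lam i) * Real.sqrt (lam i) from
          (Real.mul_self_sqrt (hnn i)).symm]
        field_simp
        rw [Real.sqrt_sq (Real.sqrt_nonneg _)]
    have hee : ∀ i, e i * e i = e i := by intro i; rcases he01 i with h | h <;> simp [h]
    have hYY : (diagonal e * star V)ᴴ * (diagonal e * star V) = V * diagonal e * star V := by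
      simp only [Matrix.conjTranspose_mul, Matrix.diagonal_conjTranspose, hsVH]
      rw [show star e = e from funext fun i => star_trivial _]
      rw [Matrix.mul_assoc V, ← Matrix.mul_assoc (diagonal e), Matrix.diagonal_mul_diagonal]
      rw [show (fun i => e i * e i) = e from funext fun i => hee i, ← Matrix.mul_assoc]
    have key : ((B * (V * diagonal g * star V)) *ᵥ x) ⬝ᵥ ((B * (V * diagonal g * star V)) *ᵥ x)
        = ((diagonal e * star V) *ᵥ x) ⬝ᵥ ((diagonal e * star V) *ᵥ x) := by
      rw [← dot_conjTranspose_mulVec', ← dot_conjTranspose_mulVec', hWW, hYY]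
    have hxx : (star V *ᵥ x) ⬝ᵥ (star V *ᵥ x) = x ⬝ᵥ x := by
      have h2 := dot_conjTranspose_mulVec' (star V) (star V) x
      rw [hsVH, hVVs] at h2
      simpa using h2.symm
    have hYx : (diagonal e * star V) *ᵥ x = fun i => e i * (star V *ᵥ x) i := by
      funext i
      rw [← mulVec_mulVec]
      simp [mulVec_diagonal]
    rw [key, ← hxx, hYx]
    simp only [dotProduct]
    refine Finset.sum_le_sum fun i _ => ?_
    rcases he01 i with h | h
    · simp only [h, zero_mul]
      exact mul_self_nonneg _
    · simp [h]
  · -- trace equality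
    have hmain : Bᴴ * (B * (V * diagonal g * star V))
        = V * diagonal (fun i => Real.sqrt (lam i)) * star V := by
      rw [← Matrix.mul_assoc, hBB, conj_diag_mul V hVsV]
      have hfe : (fun i => lam i * g i) = (fun i => Real.sqrt (lam i)) := by
        funext i
        by_cases h : lam i = 0
        · simp [hg, h]
        · have hs : Real.sqrt (lam i) ≠ 0 :=
            Real.sqrt_ne_zero'.mpr (lt_of_le_of_ne (hnn i) (Ne.symm h))
          simp only [hg, if_neg h]
          rw [show lam i = Real.sqrt (lam i) * Real.sqrt (lam i) from
            (Real.mul_self_sqrt (hnn i)).symm]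
          field_simp
          rw [Real.sqrt_sq (Real.sqrt_nonneg _)]
      rw [hfe]
    rw [hmain, Matrix.trace_mul_cycle, hVsV, Matrix.one_mul, Matrix.trace_diagonal]

/-- Subadditivity of the nuclear norm. -/
lemma nn_add_le (A B : Matrix m n ℝ) :
    (∑ i, Real.sqrt ((isHermitian_conjTranspose_mul_self (A + B)).eigenvalues i))
      ≤ (∑ i, Real.sqrt ((isHermitian_conjTranspose_mul_self A).eigenvalues i))
        + ∑ i, Real.sqrt ((isHermitian_conjTranspose_mul_self B).eigenvalues i) := by
  obtain ⟨W, hW, hTr⟩ := exists_opt (A + B)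
  calc (∑ i, Real.sqrt ((isHermitian_conjTranspose_mul_self (A + B)).eigenvalues i))
      = ((A + B)ᴴ * W).trace := hTr.symm
    _ = (Aᴴ * W).trace + (Bᴴ * W).trace := by
        rw [Matrix.conjTranspose_add, Matrix.add_mul, Matrix.trace_add]
    _ ≤ _ := add_le_add (trace_le_nn A W hW) (trace_le_nn B W hW)

lemma posSemidef_fromBlocks' {A : Matrix p p ℝ} {B : Matrix q q ℝ}
    (hA : A.PosSemidef) (hB : B.PosSemidef) : (fromBlocks A 0 0 B).PosSemidef := by
  refine Matrix.PosSemidef.of_dotProduct_mulVec_nonneg ?_ ?_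
  · exact Matrix.IsHermitian.fromBlocks hA.1 (by simp) hB.1
  · intro x
    rw [← Sum.elim_comp_inl_inr x, fromBlocks_mulVec, Function.star_sumElim,
      sumElim_dotProduct_sumElim]
    simp only [Matrix.zero_mulVec, add_zero, zero_add]
    exact add_nonneg (hA.dotProduct_mulVec_nonneg _) (hB.dotProduct_mulVec_nonneg _)

lemma trace_fromBlocks' (A : Matrix p p ℝ) (B : Matrix q q ℝ) :
    (fromBlocks A 0 0 B).trace = A.trace + B.trace := by
  simp [Matrix.trace, Fintype.sum_sum_type]

lemma sqrt_fromBlocks {A : Matrix p p ℝ} {B : Matrix q q ℝ}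
    (hA : A.PosSemidef) (hB : B.PosSemidef) (hF : (fromBlocks A 0 0 B).PosSemidef) :
    hF.sqrt = fromBlocks hA.sqrt 0 0 hB.sqrt := by
  refine ((posSemidef_fromBlocks' hA.posSemidef_sqrt hB.posSemidef_sqrt).eq_sqrt_of_sq_eq
    hF ?_).symm
  rw [pow_two, Matrix.fromBlocks_multiply]
  simp [hA.sqrt_mul_self, hB.sqrt_mul_self]

/-- Equality case: nuclear norm of a column-concatenation with orthogonal blocks. -/
lemma nn_fromColumns_eq (Z₁ : Matrix m p ℝ) (Z₂ : Matrix m q ℝ) (h : Z₁ᴴ * Z₂ = 0) :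
    (∑ i, Real.sqrt ((isHermitian_conjTranspose_mul_self (fromCols Z₁ Z₂)).eigenvalues i))
      = (∑ i, Real.sqrt ((isHermitian_conjTranspose_mul_self Z₁).eigenvalues i))
        + ∑ i, Real.sqrt ((isHermitian_conjTranspose_mul_self Z₂).eigenvalues i) := by
  have h' : Z₂ᴴ * Z₁ = 0 := by
    have := congrArg Matrix.conjTranspose h
    simpa [Matrix.conjTranspose_mul] using this
  have hE : (fromCols Z₁ Z₂)ᴴ * fromCols Z₁ Z₂ = fromBlocks (Z₁ᴴ * Z₁) 0 0 (Z₂ᴴ * Z₂) := by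
    rw [conjTranspose_fromCols_eq_fromRows_conjTranspose, fromRows_mul_fromCols, h, h']
  have hA : (Z₁ᴴ * Z₁).PosSemidef := posSemidef_conjTranspose_mul_self Z₁
  have hB : (Z₂ᴴ * Z₂).PosSemidef := posSemidef_conjTranspose_mul_self Z₂
  have hF : (fromBlocks (Z₁ᴴ * Z₁) 0 0 (Z₂ᴴ * Z₂)).PosSemidef := posSemidef_fromBlocks' hA hB
  rw [sum_sqrt_eig_congr hE (isHermitian_conjTranspose_mul_self _) hF.1]
  rw [← trace_sqrt_eq' hF, sqrt_fromBlocks hA hB hF, trace_fromBlocks',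
    trace_sqrt_eq' hA, trace_sqrt_eq' hB]

end NuclearAux

noncomputable def nuclearNorm {d m : ℕ} (A : Matrix (Fin d) (Fin m) ℝ) : ℝ :=
  ∑ i, Real.sqrt ((Matrix.isHermitian_conjTranspose_mul_self A).eigenvalues i)

theorem stmt_14 (d m₁ m₂ : ℕ) (Z₁ : Matrix (Fin d) (Fin m₁) ℝ) (Z₂ : Matrix (Fin d) (Fin m₂) ℝ) :
    (∑ i, Real.sqrt
        ((Matrix.isHermitian_conjTranspose_mul_self (Matrix.fromCols Z₁ Z₂)).eigenvalues i)) ≤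
      nuclearNorm Z₁ + nuclearNorm Z₂ ∧
    (Z₁ᵀ * Z₂ = 0 →
      (∑ i, Real.sqrt
          ((Matrix.isHermitian_conjTranspose_mul_self (Matrix.fromCols Z₁ Z₂)).eigenvalues i)) =
        nuclearNorm Z₁ + nuclearNorm Z₂) := by
  constructor
  · -- triangle inequality
    have hsplit : fromCols Z₁ Z₂
        = fromCols Z₁ (0 : Matrix (Fin d) (Fin m₂) ℝ)
          + fromCols (0 : Matrix (Fin d) (Fin m₁) ℝ) Z₂ := by
      ext i j
      cases j <;> simp [fromCols]
    have h1 : (∑ i, Real.sqrt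
          ((Matrix.isHermitian_conjTranspose_mul_self (Matrix.fromCols Z₁ Z₂)).eigenvalues i))
        = ∑ i, Real.sqrt ((Matrix.isHermitian_conjTranspose_mul_self
            (fromCols Z₁ (0 : Matrix (Fin d) (Fin m₂) ℝ)
              + fromCols (0 : Matrix (Fin d) (Fin m₁) ℝ) Z₂)).eigenvalues i) :=
      sum_sqrt_eig_congr (by rw [← hsplit]) _ _
    have hC1 := nn_fromColumns_eq Z₁ (0 : Matrix (Fin d) (Fin m₂) ℝ) (by simp)
    have hC2 := nn_fromColumns_eq (0 : Matrix (Fin d) (Fin m₁) ℝ) Z₂ (by simp)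
    have hz₂ : (∑ i, Real.sqrt ((Matrix.isHermitian_conjTranspose_mul_self
        (0 : Matrix (Fin d) (Fin m₂) ℝ)).eigenvalues i)) = 0 := by
      rw [sum_sqrt_eig_congr (by rw [Matrix.mul_zero] : (0 : Matrix (Fin d) (Fin m₂) ℝ)ᴴ * (0 : Matrix (Fin d) (Fin m₂) ℝ) = 0) _
        (Matrix.isHermitian_zero)]
      exact sum_sqrt_eig_zero _
    have hz₁ : (∑ i, Real.sqrt ((Matrix.isHermitian_conjTranspose_mul_self
        (0 : Matrix (Fin d) (Fin m₁) ℝ)).eigenvalues i)) = 0 := by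
      rw [sum_sqrt_eig_congr (by rw [Matrix.mul_zero] : (0 : Matrix (Fin d) (Fin m₁) ℝ)ᴴ * (0 : Matrix (Fin d) (Fin m₁) ℝ) = 0) _
        (Matrix.isHermitian_zero)]
      exact sum_sqrt_eig_zero _
    rw [h1]
    refine (nn_add_le _ _).trans ?_
    rw [hC1, hC2, hz₁, hz₂, nuclearNorm, nuclearNorm]
    linarith
  · -- equality case
    intro h
    have h' : Z₁ᴴ * Z₂ = 0 := by
      rw [conjTranspose_eq_transpose_of_trivial]
      exact h
    exact nn_fromColumns_eq Z₁ Z₂ h'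
end

section
/- Jensen-type bound for rate reduction with two groups: let Z₁ ∈ ℝ^{d×m₁}, Z₂ ∈ ℝ^{d×m₂}, m = m₁ + m₂, and Z = [Z₁ Z₂]. Then the rate reduction ΔR := (1/2) log det(I + (d/(mε²)) Z Zᵀ) − (m₁/m)·(1/2) log det(I + (d/(m₁ε²)) Z₁Z₁ᵀ) − (m₂/m)·(1/2) log det(I + (d/(m₂ε²)) Z₂Z₂ᵀ) is nonnegative. -/
/-!
Since `Z Zᵀ = Z₁ Z₁ᵀ + Z₂ Z₂ᵀ`, the matrix in the first log-determinant is the convex combination,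
with weights `m₁ / m` and `m₂ / m`, of the two per-class matrices `1 + (d / (mᵢ ε²)) Zᵢ Zᵢᵀ`, so the
claim is Jensen's inequality for `log det`, which is concave on positive definite matrices.
For concavity, write `A = S * S` with `S = √A`; then `s A + t B = S (s + t C) S` with
`C = S⁻¹ B S⁻¹`, and the inequality reduces to the concavity of `log` at the eigenvalues of `C`.
-/

open Matrix

namespace Matrix

variable {n : Type*}

lemma posDef_smul_add_smul {A B : Matrix n n ℝ} (hA : A.PosDef) (hB : B.PosDef)
    {s t : ℝ} (hs : 0 ≤ s) (ht : 0 ≤ t) (hst : s + t = 1) : (s • A + t • B).PosDef := by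
  rcases hs.eq_or_lt with rfl | hs
  · simpa [show t = 1 by linarith] using hB
  · exact (hA.smul hs).add_posSemidef (hB.posSemidef.smul ht)

lemma convex_setOf_posDef : Convex ℝ {A : Matrix n n ℝ | A.PosDef} :=
  fun _ hA _ hB _ _ hs ht hst => posDef_smul_add_smul hA hB hs ht hst

variable [Fintype n] [DecidableEq n]

lemma IsHermitian.det_cfc {A : Matrix n n ℝ} (hA : A.IsHermitian) (f : ℝ → ℝ) :
    (cfc f A).det = ∏ i, f (hA.eigenvalues i) := by
  rw [hA.cfc_eq]
  simp [IsHermitian.cfc, -Unitary.conjStarAlgAut_apply]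

lemma IsHermitian.det_smul_one_add_smul {C : Matrix n n ℝ} (hC : C.IsHermitian) (s t : ℝ) :
    (s • 1 + t • C).det = ∏ i, (s + t * hC.eigenvalues i) := by
  rw [← hC.det_cfc (fun x => s + t * x), cfc_const_add s (t * ·) C,
    cfc_const_mul_id t C hC.isSelfAdjoint, Algebra.algebraMap_eq_smul_one]

lemma PosDef.mul_log_det_le_log_det_smul_one_add_smul {C : Matrix n n ℝ} (hC : C.PosDef)
    {s t : ℝ} (hs : 0 ≤ s) (ht : 0 ≤ t) (hst : s + t = 1) :
    t * Real.log C.det ≤ Real.log (s • 1 + t • C).det := by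
  have hpos := hC.eigenvalues_pos
  have hlog : ∀ i, t * Real.log (hC.1.eigenvalues i) ≤ Real.log (s + t * hC.1.eigenvalues i) := by
    intro i
    simpa using strictConcaveOn_log_Ioi.concaveOn.2 (Set.mem_Ioi.mpr one_pos)
      (Set.mem_Ioi.mpr (hpos i)) hs ht hst
  have hterm : ∀ i, s + t * hC.1.eigenvalues i ≠ 0 := fun i => by
    rcases ht.eq_or_lt with rfl | ht
    · linarith
    · exact (add_pos_of_nonneg_of_pos hs (mul_pos ht (hpos i))).ne'
  rw [hC.1.det_smul_one_add_smul, hC.1.det_eq_prod_eigenvalues, ← RCLike.ofReal_prod,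
    RCLike.ofReal_real_eq_id, id, Real.log_prod fun i _ => (hpos i).ne', Finset.mul_sum,
    Real.log_prod fun i _ => hterm i]
  exact Finset.sum_le_sum fun i _ => hlog i

open scoped MatrixOrder in
theorem concaveOn_log_det :
    ConcaveOn ℝ {A : Matrix n n ℝ | A.PosDef} (fun A => Real.log A.det) := by
  refine ⟨convex_setOf_posDef, fun A hA B hB s t hs ht hst => ?_⟩
  set S := CFC.sqrt A
  have hSS : S * S = A := CFC.sqrt_mul_sqrt_self A hA.posSemidef.nonneg
  have hS : S.IsHermitian := (CFC.sqrt_nonneg A).posSemidef.1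
  have hSdet : S.det ≠ 0 := fun h => hA.det_pos.ne' (by rw [← hSS, det_mul, h, zero_mul])
  have hSunit : IsUnit S.det := hSdet.isUnit
  set C := S⁻¹ * B * S⁻¹
  have hC : C.PosDef := by
    simpa only [hS.inv.eq] using hB.conjTranspose_mul_mul_same (mulVec_injective_of_det_ne_zero
      (isUnit_nonsing_inv_det S hSunit).ne_zero)
  have hB' : B = S * C * S := by
    simp only [C, ← mul_assoc, mul_nonsing_inv _ hSunit, one_mul]
    rw [mul_assoc, nonsing_inv_mul _ hSunit, mul_one]
  have hcomb : s • A + t • B = S * (s • 1 + t • C) * S := by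
    rw [← hSS, hB', mul_add, add_mul, mul_smul_comm, smul_mul_assoc, mul_one, mul_smul_comm,
      smul_mul_assoc, mul_assoc S C]
  have hMdet := (posDef_smul_add_smul PosDef.one hC hs ht hst).det_pos.ne'
  have hscalar := hC.mul_log_det_le_log_det_smul_one_add_smul hs ht hst
  simp only [smul_eq_mul]
  rw [hcomb, ← hSS, hB']
  simp only [det_mul]
  rw [Real.log_mul (mul_ne_zero hSdet hMdet) hSdet, Real.log_mul hSdet hMdet,
    Real.log_mul (mul_ne_zero hSdet hC.det_pos.ne') hSdet, Real.log_mul hSdet hC.det_pos.ne',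
    Real.log_mul hSdet hSdet]
  linear_combination hscalar + (2 * Real.log S.det) * hst

lemma posDef_one_add_smul_mul_transpose {m : Type*} [Fintype m] (Z : Matrix n m ℝ) {c : ℝ}
    (hc : 0 ≤ c) : (1 + c • (Z * Zᵀ)).PosDef :=
  PosDef.one.add_posSemidef ((posSemidef_self_mul_conjTranspose Z).smul hc)

end Matrix

lemma div_mul_div_mul_cancel_left {K : Type*} [Field K] {k : K} (hk : k ≠ 0) (m d e : K) :
    k / m * (d / (k * e)) = d / (m * e) := by
  rw [div_mul_div_comm, mul_left_comm, mul_div_mul_left _ _ hk]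

theorem stmt_17_general (d m₁ m₂ : ℕ) (hm₁ : 0 < m₁) (hm₂ : 0 < m₂)
    (Z₁ : Matrix (Fin d) (Fin m₁) ℝ) (Z₂ : Matrix (Fin d) (Fin m₂) ℝ) (ε : ℝ) :
    0 ≤ (1 / 2) * Real.log
        (Matrix.det (1 + ((d : ℝ) / ((m₁ + m₂ : ℕ) * ε ^ 2)) • (Z₁ * Z₁ᵀ + Z₂ * Z₂ᵀ))) -
      ((m₁ : ℝ) / (m₁ + m₂ : ℕ)) * ((1 / 2) * Real.log
        (Matrix.det (1 + ((d : ℝ) / (m₁ * ε ^ 2)) • (Z₁ * Z₁ᵀ)))) -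
      ((m₂ : ℝ) / (m₁ + m₂ : ℕ)) * ((1 / 2) * Real.log
        (Matrix.det (1 + ((d : ℝ) / (m₂ * ε ^ 2)) • (Z₂ * Z₂ᵀ)))) := by
  have hm : ((m₁ + m₂ : ℕ) : ℝ) ≠ 0 := by positivity
  have hweights : (m₁ : ℝ) / (m₁ + m₂ : ℕ) + (m₂ : ℝ) / (m₁ + m₂ : ℕ) = 1 := by
    rw [← add_div, ← Nat.cast_add, div_self hm]
  have hmix : ((m₁ : ℝ) / (m₁ + m₂ : ℕ)) • (1 + ((d : ℝ) / (m₁ * ε ^ 2)) • (Z₁ * Z₁ᵀ)) +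
      ((m₂ : ℝ) / (m₁ + m₂ : ℕ)) • (1 + ((d : ℝ) / (m₂ * ε ^ 2)) • (Z₂ * Z₂ᵀ)) =
      1 + ((d : ℝ) / ((m₁ + m₂ : ℕ) * ε ^ 2)) • (Z₁ * Z₁ᵀ + Z₂ * Z₂ᵀ) := by
    rw [smul_add, smul_add, smul_smul, smul_smul, add_add_add_comm, ← add_smul, hweights,
      one_smul, div_mul_div_mul_cancel_left (by positivity),
      div_mul_div_mul_cancel_left (by positivity), smul_add]
  have hconcave := concaveOn_log_det.2
    (posDef_one_add_smul_mul_transpose Z₁ (c := d / (m₁ * ε ^ 2)) (by positivity))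
    (posDef_one_add_smul_mul_transpose Z₂ (c := d / (m₂ * ε ^ 2)) (by positivity))
    (by positivity) (by positivity) hweights
  simp only [smul_eq_mul, hmix] at hconcave
  linarith

theorem stmt_17 (d m₁ m₂ : ℕ) (hm₁ : 0 < m₁) (hm₂ : 0 < m₂)
    (Z₁ : Matrix (Fin d) (Fin m₁) ℝ) (Z₂ : Matrix (Fin d) (Fin m₂) ℝ) (ε : ℝ) (hε : 0 < ε) :
    0 ≤ (1 / 2) * Real.log
        (Matrix.det (1 + ((d : ℝ) / ((m₁ + m₂ : ℕ) * ε ^ 2)) • (Z₁ * Z₁ᵀ + Z₂ * Z₂ᵀ))) -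
      ((m₁ : ℝ) / (m₁ + m₂ : ℕ)) * ((1 / 2) * Real.log
        (Matrix.det (1 + ((d : ℝ) / (m₁ * ε ^ 2)) • (Z₁ * Z₁ᵀ)))) -
      ((m₂ : ℝ) / (m₁ + m₂ : ℕ)) * ((1 / 2) * Real.log
        (Matrix.det (1 + ((d : ℝ) / (m₂ * ε ^ 2)) • (Z₂ * Z₂ᵀ)))) :=
  stmt_17_general d m₁ m₂ hm₁ hm₂ Z₁ Z₂ ε
end
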